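/- Let D ∈ ℚ[[w, z, ℏ]] be the formal power series D(w,z) = exp((w³+z³)ℏ/24) · ∑_{n≥0} (n!/(2n+1)!) · (½·w·z·(w+z)·ℏ)^n. Suppose A ∈ ℚ[[w, z, ℏ]] is symmetric under interchanging w and z, satisfies A(0,z) = exp(z³ℏ/24), and satisfies the equation (2w·∂_w + 1)((w+z)·A(w,z)) = w·A(w,z) + ¼·(w+z)³·w·ℏ·A(w,z) + A(w,0)·z·A(0,z) + 2w·A(w,0)·A(0,z). Then A = D. -/

import Mathlib

noncomputable section

/-- The ring `ℚ[[w, z, ℏ]]` of formal power series in three variables. -/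
abbrev R3 : Type := MvPowerSeries (Fin 3) ℚ

/-- The variable `w`. -/
def W : R3 := MvPowerSeries.X 0
/-- The variable `z`. -/
def Z : R3 := MvPowerSeries.X 1
/-- The variable `ℏ`. -/
def H : R3 := MvPowerSeries.X 2

/-- Total degree of a monomial. -/
def deg (m : Fin 3 →₀ ℕ) : ℕ := m 0 + m 1 + m 2

/-- The formal exponential `exp S = ∑_{n≥0} Sⁿ/n!` of a power series `S`
(intended for `S` with zero constant term, in which case the coefficient of any
monomial `m` only receives contributions from `n ≤ deg m`). -/
def mvExp (S : R3) : R3 := fun m =>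
  ∑ n ∈ Finset.range (deg m + 1), (n.factorial : ℚ)⁻¹ * MvPowerSeries.coeff (R := ℚ) m (S ^ n)

/-- The sum `∑_{n≥0} f n` of a family of power series (intended when the coefficient of
any monomial `m` in `f n` vanishes for `n > deg m`, e.g. when `f n` is divisible by `ℏⁿ`). -/
def seriesSum (f : ℕ → R3) : R3 := fun m =>
  ∑ n ∈ Finset.range (deg m + 1), MvPowerSeries.coeff (R := ℚ) m (f n)

/-- The formal partial derivative `∂_w`, sending `wⁱ zʲ ℏᵏ` to `i·wⁱ⁻¹ zʲ ℏᵏ`. -/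
def dW (f : R3) : R3 := fun m =>
  ((m 0 : ℚ) + 1) * MvPowerSeries.coeff (R := ℚ) (m + Finsupp.single 0 1) f

/-- Setting `z = 0`: keep only the monomials not involving `z`. -/
def setZ0 (f : R3) : R3 := fun m => if m 1 = 0 then MvPowerSeries.coeff (R := ℚ) m f else 0

/-- Setting `w = 0`: keep only the monomials not involving `w`. -/
def setW0 (f : R3) : R3 := fun m => if m 0 = 0 then MvPowerSeries.coeff (R := ℚ) m f else 0

/-- Substituting `-z` for `z`: the coefficient of `wⁱ zʲ ℏᵏ` picks up a sign `(-1)ʲ`. -/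
def negZ (f : R3) : R3 := fun m => (-1 : ℚ) ^ (m 1) * MvPowerSeries.coeff (R := ℚ) m f

/-- The automorphism swapping `w` and `z`, on the level of coefficients. -/
def swapWZ (f : R3) : R3 := fun m =>
  MvPowerSeries.coeff (R := ℚ) (Finsupp.equivMapDomain (Equiv.swap (0 : Fin 3) 1) m) f

/-- Dijkgraaf's two-point function
`D(w,z) = exp((w³+z³)ℏ/24) · ∑_{n≥0} (n!/(2n+1)!) (½ w z (w+z) ℏ)ⁿ`. -/
def Dser : R3 :=
  mvExp (MvPowerSeries.C (σ := Fin 3) (R := ℚ) (1 / 24) * (W ^ 3 + Z ^ 3) * H) *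
    seriesSum fun n =>
      MvPowerSeries.C (σ := Fin 3) (R := ℚ) ((n.factorial : ℚ) / ((2 * n + 1).factorial : ℚ)) *
        (MvPowerSeries.C (σ := Fin 3) (R := ℚ) (1 / 2) * W * Z * (W + Z) * H) ^ n

/-!
Write `D = E · b(y)` with `E = exp((w³+z³)ℏ/24)`, `y = ½ w z (w+z) ℏ` and
`b(t) = ∑ n!/(2n+1)! tⁿ`. Since `∂_w E = (w²ℏ/8) E` and `2w(w+z) ∂_w y = 2(2w+z) y`, the
equation with `A(w,0) A(0,z)` replaced by `E` becomes for `A = D`, after dividing by `(2w+z) E`,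
the ODE `b + 2t b' = 1 + t b/2`, i.e. the recursion `(2n+1) bₙ = bₙ₋₁/2` of the coefficients.
For a solution `A`, symmetry and the boundary value give `A(w,0) A(0,z) = E`, so `C = A - D`
solves `(2w∂_w + 1)(z C) = w Q` with `Q` of `w`-order at least that of `C`. At `z` times a
monomial of minimal `w`-degree `k` in `C` this reads `(2k+1) c = 0`, hence `C = 0`.
-/

open MvPowerSeries Finsupp
open PowerSeries (derivative)

namespace MvPowerSeries

variable {σ R : Type*} [CommRing R]

theorem coeff_add_single_X_mul (i : σ) (d : σ →₀ ℕ) (F : MvPowerSeries σ R) :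
    coeff (d + single i 1) (X i * F) = coeff d F := by
  rw [X_def, add_comm, coeff_add_monomial_mul, one_mul]

theorem coeff_two_mul_X_mul_pderiv_add (i : σ) (d : σ →₀ ℕ) (F : MvPowerSeries σ R) :
    coeff d (2 * X i * pderiv R i F + F) = (2 * d i + 1) * coeff d F := by
  classical
  rw [show (2 : MvPowerSeries σ R) * X i * pderiv R i F + F =
      X i * pderiv R i F + X i * pderiv R i F + F by ring, map_add, map_add, X_def,
    coeff_monomial_mul]
  split_ifs with h
  · rw [coeff_pderiv, tsub_add_cancel_of_le h, tsub_apply, single_eq_same,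
      Nat.cast_sub (by simpa using h i)]
    push_cast; ring
  · have : d i = 0 := by
      by_contra hd; exact h (single_le_iff.2 (Nat.one_le_iff_ne_zero.2 hd))
    simp [this]

theorem le_weightedOrder_pderiv_X_mul [DecidableEq σ] (i : σ) (F : MvPowerSeries σ R) :
    F.weightedOrder (Pi.single i 1) ≤ (pderiv R i (X i * F)).weightedOrder (Pi.single i 1) := by
  refine le_weightedOrder _ fun d hd => ?_
  rw [coeff_pderiv, coeff_add_single_X_mul, coeff_eq_zero_of_lt_weightedOrder _ hd, zero_mul]

theorem add_one_le_weightedOrder_X_mul [DecidableEq σ] [Nontrivial R] (i : σ)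
    (F : MvPowerSeries σ R) :
    F.weightedOrder (Pi.single i 1) + 1 ≤ (X i * F).weightedOrder (Pi.single i 1) := by
  refine le_trans ?_ (le_weightedOrder_mul _)
  rw [X_def, weightedOrder_monomial_of_ne_zero _ one_ne_zero, weight_single_one_apply,
    single_eq_same, Nat.cast_one, add_comm]

theorem eq_zero_of_two_mul_X_mul_pderiv_add_eq_X_mul [DecidableEq σ] [IsDomain R] [CharZero R]
    {i j : σ} (hij : i ≠ j) {F Q : MvPowerSeries σ R}
    (hQ : F.weightedOrder (Pi.single i 1) ≤ Q.weightedOrder (Pi.single i 1))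
    (h : 2 * X i * pderiv R i (X j * F) + X j * F = X i * Q) : F = 0 := by
  by_contra hF
  obtain ⟨d, hd, hdF⟩ := exists_coeff_ne_zero_and_weightedOrder (Pi.single i 1)
    ((ne_zero_iff_weightedOrder_finite _).1 hF)
  rw [weight_single_one_apply] at hdF
  have hdi : (d + single j 1 : σ →₀ ℕ) i = d i := by simp [hij.symm]
  have hRHS : coeff (d + single j 1) (X i * Q) = 0 := by
    refine coeff_eq_zero_of_lt_weightedOrder _
      (lt_of_lt_of_le ?_ (add_one_le_weightedOrder_X_mul i Q))
    rw [weight_single_one_apply, hdi]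
    calc (d i : ℕ∞) < d i + 1 := by exact_mod_cast Nat.lt_succ_self _
      _ ≤ Q.weightedOrder (Pi.single i 1) + 1 := by rw [hdF]; exact add_le_add_left hQ 1
  have hcoeff := congrArg (coeff (d + single j 1)) h
  rw [coeff_two_mul_X_mul_pderiv_add, coeff_add_single_X_mul, hRHS, hdi] at hcoeff
  have hodd : ((2 * d i + 1 : ℕ) : R) ≠ 0 := Nat.cast_ne_zero.2 (Nat.succ_ne_zero _)
  push_cast at hodd
  exact hd ((mul_eq_zero.1 hcoeff).resolve_left hodd)

theorem natCast_le_order_C_mul_pow {y : MvPowerSeries σ R} (hy : constantCoeff y = 0) (c : R)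
    (n : ℕ) : (n : ℕ∞) ≤ (C c * y ^ n).order :=
  (le_order_pow_of_constantCoeff_eq_zero n hy).trans (le_add_self.trans le_order_mul)

end MvPowerSeries

theorem deg_eq_degree (m : Fin 3 →₀ ℕ) : deg m = m.degree := by
  rw [degree_eq_sum, Fin.sum_univ_three]; rfl

theorem deg_add_single (m : Fin 3 →₀ ℕ) (i : Fin 3) : deg (m + single i 1) = deg m + 1 := by
  rw [deg_eq_degree, deg_eq_degree, map_add, degree_single]

theorem dW_eq_pderiv : dW = pderiv ℚ 0 := by
  funext F; ext m; rw [coeff_pderiv, mul_comm]; rfl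

theorem pderiv_W : pderiv ℚ 0 W = 1 := pderiv_X_self

theorem pderiv_Z : pderiv ℚ 0 Z = 0 := pderiv_X_of_ne (by decide)

theorem pderiv_H : pderiv ℚ 0 H = 0 := pderiv_X_of_ne (by decide)

section seriesSum

variable {f g : ℕ → R3}

theorem coeff_seriesSum_of_lt (hf : ∀ n : ℕ, (n : ℕ∞) ≤ (f n).order) {m : Fin 3 →₀ ℕ}
    {N : ℕ} (hN : deg m < N) : coeff m (seriesSum f) = ∑ n ∈ Finset.range N, coeff m (f n) := by
  refine Finset.sum_subset (Finset.range_mono (by omega)) fun n _ hn => coeff_of_lt_order ?_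
  rw [← deg_eq_degree]
  simp only [Finset.mem_range, not_lt] at hn
  exact lt_of_lt_of_le (by exact_mod_cast hn) (hf n)

theorem mul_seriesSum (hf : ∀ n : ℕ, (n : ℕ∞) ≤ (f n).order) (G : R3) :
    G * seriesSum f = seriesSum fun n => G * f n := by
  ext m
  change _ = ∑ n ∈ Finset.range (deg m + 1), coeff m (G * f n)
  simp only [coeff_mul]
  rw [Finset.sum_comm]
  refine Finset.sum_congr rfl fun p hp => ?_
  have hp2 : deg p.2 < deg m + 1 := by
    rw [Finset.HasAntidiagonal.mem_antidiagonal] at hp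
    rw [← hp, deg_eq_degree, deg_eq_degree, map_add]
    omega
  rw [coeff_seriesSum_of_lt hf hp2, Finset.mul_sum]

theorem pderiv_seriesSum (i : Fin 3) (h0 : pderiv ℚ i (f 0) = 0)
    (hs : ∀ n, pderiv ℚ i (f (n + 1)) = g n) : pderiv ℚ i (seriesSum f) = seriesSum g := by
  ext m
  change (∑ n ∈ Finset.range (deg (m + single i 1) + 1), coeff _ (f n)) * _ =
    ∑ n ∈ Finset.range (deg m + 1), coeff m (g n)
  rw [deg_add_single, Finset.sum_mul, Finset.sum_range_succ']
  simp only [← coeff_pderiv, hs, h0, map_zero, add_zero]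

end seriesSum

theorem seriesSum_eq_subst {y : R3} (hy : constantCoeff y = 0) (φ : PowerSeries ℚ) :
    seriesSum (fun n => C (PowerSeries.coeff n φ) * y ^ n) = φ.subst y := by
  ext m
  change ∑ n ∈ Finset.range (deg m + 1), coeff m (C _ * y ^ n) = _
  rw [PowerSeries.coeff_subst (PowerSeries.HasSubst.of_constantCoeff_zero hy),
    finsum_eq_sum_of_support_subset (s := Finset.range (deg m + 1))]
  · exact Finset.sum_congr rfl fun n _ => by rw [coeff_C_mul, smul_eq_mul]
  · intro n hn
    by_contra hnm
    simp only [Finset.coe_range, Set.mem_Iio, not_lt] at hnm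
    refine hn (smul_eq_zero_of_right _ (coeff_of_lt_order ?_))
    rw [← deg_eq_degree]
    exact lt_of_lt_of_le (by exact_mod_cast hnm) (le_order_pow_of_constantCoeff_eq_zero n hy)

theorem pderiv_subst {y : R3} (hy : constantCoeff y = 0) (φ : PowerSeries ℚ) (i : Fin 3) :
    pderiv ℚ i (φ.subst y) = (derivative ℚ φ).subst y * pderiv ℚ i y := by
  rw [← seriesSum_eq_subst hy, ← seriesSum_eq_subst hy, mul_comm,
    mul_seriesSum fun n => natCast_le_order_C_mul_pow hy _ n]
  refine pderiv_seriesSum i (by simp) fun n => ?_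
  rw [Derivation.leibniz, pderiv_C, smul_zero, add_zero, pderiv_pow, smul_eq_mul,
    PowerSeries.coeff_derivative, map_mul]
  simp only [map_add, map_natCast, map_one, Nat.add_sub_cancel]
  push_cast
  ring

section mvExp

variable {S T : R3}

theorem mvExp_eq_subst (hS : constantCoeff S = 0) : mvExp S = (PowerSeries.exp ℚ).subst S := by
  rw [← seriesSum_eq_subst hS]
  ext m
  change ∑ n ∈ Finset.range (deg m + 1), _ = ∑ n ∈ Finset.range (deg m + 1), _
  refine Finset.sum_congr rfl fun n _ => ?_
  change _ = coeff m (C _ * S ^ n)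
  rw [coeff_C_mul, PowerSeries.coeff_exp, one_div, Algebra.algebraMap_self, RingHom.id_apply]

theorem constantCoeff_mvExp (S : R3) : constantCoeff (mvExp S) = 1 := by
  rw [← coeff_zero_eq_constantCoeff_apply]
  change ∑ n ∈ Finset.range (deg 0 + 1), (n.factorial : ℚ)⁻¹ * coeff 0 (S ^ n) = 1
  simp [deg]

theorem pderiv_mvExp (hS : constantCoeff S = 0) (i : Fin 3) :
    pderiv ℚ i (mvExp S) = pderiv ℚ i S * mvExp S := by
  rw [mvExp_eq_subst hS, pderiv_subst hS, PowerSeries.derivative_exp, mul_comm]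

theorem mul_mvExp_neg_eq_one (hS : constantCoeff S = 0) {F : R3}
    (hF : ∀ i, pderiv ℚ i F = pderiv ℚ i S * F) (hF1 : constantCoeff F = 1) :
    F * mvExp (-S) = 1 := by
  have hS' : constantCoeff (-S) = 0 := by rw [map_neg, hS, neg_zero]
  refine pderiv.ext (fun i => ?_) (by rw [map_mul, hF1, constantCoeff_mvExp, map_one, one_mul])
  rw [Derivation.leibniz, pderiv_mvExp hS', hF, map_neg, pderiv_one, smul_eq_mul, smul_eq_mul]
  ring

theorem eq_mvExp_of_pderiv_eq_mul (hS : constantCoeff S = 0) {F : R3}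
    (hF : ∀ i, pderiv ℚ i F = pderiv ℚ i S * F) (hF1 : constantCoeff F = 1) :
    F = mvExp S := by
  have hE := mul_mvExp_neg_eq_one hS (pderiv_mvExp hS) (constantCoeff_mvExp S)
  calc F = F * (mvExp S * mvExp (-S)) := by rw [hE, mul_one]
    _ = mvExp S * (F * mvExp (-S)) := by ring
    _ = mvExp S := by rw [mul_mvExp_neg_eq_one hS hF hF1, mul_one]

theorem mvExp_add (hS : constantCoeff S = 0) (hT : constantCoeff T = 0) :
    mvExp (S + T) = mvExp S * mvExp T := by
  refine (eq_mvExp_of_pderiv_eq_mul (by rw [map_add, hS, hT, add_zero]) (fun i => ?_)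
    (by rw [map_mul, constantCoeff_mvExp, constantCoeff_mvExp, mul_one])).symm
  rw [Derivation.leibniz, pderiv_mvExp hS, pderiv_mvExp hT, map_add, smul_eq_mul, smul_eq_mul]
  ring

end mvExp

theorem deg_equivMapDomain_swap (m : Fin 3 →₀ ℕ) :
    deg (equivMapDomain (Equiv.swap 0 1) m) = deg m := by
  simp only [deg, equivMapDomain_apply, Equiv.symm_swap]
  simp [Equiv.swap_apply_of_ne_of_ne]
  ring

theorem swapWZ_eq_rename : swapWZ = rename (Equiv.swap (0 : Fin 3) 1) := by
  funext F; ext m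
  have h := coeff_embDomain_rename (R := ℚ) (Equiv.swap (0 : Fin 3) 1).toEmbedding F
    (equivMapDomain (Equiv.swap (0 : Fin 3) 1) m)
  have hm : embDomain (Equiv.swap (0 : Fin 3) 1).toEmbedding
      (equivMapDomain (Equiv.swap (0 : Fin 3) 1) m) = m := by
    ext a; simp [embDomain_eq_mapDomain]
  rw [hm] at h
  exact h.symm

theorem swapWZ_mvExp (S : R3) : swapWZ (mvExp S) = mvExp (swapWZ S) := by
  ext m
  change ∑ n ∈ Finset.range (deg _ + 1), _ = ∑ n ∈ Finset.range (deg m + 1), _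
  rw [deg_equivMapDomain_swap]
  refine Finset.sum_congr rfl fun n _ => ?_
  rw [swapWZ_eq_rename, ← map_pow, ← swapWZ_eq_rename]
  rfl

theorem setZ0_swapWZ (F : R3) : setZ0 (swapWZ F) = swapWZ (setW0 F) := by
  ext m
  change (if m 1 = 0 then _ else 0) = if equivMapDomain (Equiv.swap 0 1) m 0 = 0 then _ else 0
  simp [equivMapDomain_apply]
  rfl

def twoPointSeries : PowerSeries ℚ :=
  PowerSeries.mk fun n => (n.factorial : ℚ) / (2 * n + 1).factorial

theorem twoPointSeries_add_two_mul_X_mul_derivative :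
    twoPointSeries + 2 * PowerSeries.X * derivative ℚ twoPointSeries =
      1 + PowerSeries.C (1 / 2) * PowerSeries.X * twoPointSeries := by
  rw [show (2 : PowerSeries ℚ) = PowerSeries.C 2 from (map_ofNat _ 2).symm]
  ext (_ | n)
  · simp [twoPointSeries]
  · simp only [mul_assoc, map_add, PowerSeries.coeff_C_mul, PowerSeries.coeff_succ_X_mul,
      PowerSeries.coeff_derivative, twoPointSeries, PowerSeries.coeff_mk, PowerSeries.coeff_one,
      Nat.succ_ne_zero, if_false, zero_add]
    rw [show 2 * (n + 1) + 1 = (2 * n + 1) + 1 + 1 by ring, Nat.factorial_succ (2 * n + 1 + 1),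
      Nat.factorial_succ (2 * n + 1), Nat.factorial_succ n]
    push_cast
    field_simp
    ring

theorem Dser_eq_mvExp_mul_subst :
    Dser = mvExp (C (1 / 24) * (W ^ 3 + Z ^ 3) * H) *
      twoPointSeries.subst (C (1 / 2) * W * Z * (W + Z) * H) := by
  rw [← seriesSum_eq_subst (by simp [W, Z, H])]
  simp only [twoPointSeries, PowerSeries.coeff_mk]
  rfl

theorem pderiv_mvExp_cubic :
    pderiv ℚ 0 (mvExp (C (1 / 24) * (W ^ 3 + Z ^ 3) * H)) =
      C (1 / 8) * W ^ 2 * H * mvExp (C (1 / 24) * (W ^ 3 + Z ^ 3) * H) := by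
  have h3 : (C (1 / 24) : R3) * 3 = C (1 / 8) := by rw [← map_ofNat C 3, ← map_mul]; norm_num
  rw [pderiv_mvExp (by simp [W, Z, H])]
  congr 1
  simp only [Derivation.leibniz, pderiv_pow, map_add, pderiv_C, pderiv_W, pderiv_Z, pderiv_H,
    smul_eq_mul]
  linear_combination (W ^ 2 * H) * h3

theorem pderiv_subst_twoPointSeries :
    pderiv ℚ 0 (twoPointSeries.subst (C (1 / 2) * W * Z * (W + Z) * H)) =
      (derivative ℚ twoPointSeries).subst (C (1 / 2) * W * Z * (W + Z) * H) *
        (C (1 / 2) * Z * H * (2 * W + Z)) := by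
  rw [pderiv_subst (by simp [W, Z, H])]
  congr 1
  simp only [Derivation.leibniz, map_add, pderiv_C, pderiv_W, pderiv_Z, pderiv_H, smul_eq_mul]
  ring

theorem subst_twoPointSeries_add_two_mul_mul_subst_derivative {y : R3}
    (hy : constantCoeff y = 0) :
    twoPointSeries.subst y + 2 * y * (derivative ℚ twoPointSeries).subst y =
      1 + C (1 / 2) * y * twoPointSeries.subst y := by
  have ha := PowerSeries.HasSubst.of_constantCoeff_zero hy
  have h := congrArg (PowerSeries.substAlgHom ha) twoPointSeries_add_two_mul_X_mul_derivative
  simpa only [map_add, map_mul, map_one, map_ofNat, PowerSeries.coe_substAlgHom,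
    PowerSeries.subst_X ha, PowerSeries.subst_C] using h

theorem Dser_equation :
    2 * W * pderiv ℚ 0 ((W + Z) * Dser) + (W + Z) * Dser =
      W * Dser + C (1 / 4) * (W + Z) ^ 3 * W * H * Dser +
        (Z + 2 * W) * mvExp (C (1 / 24) * (W ^ 3 + Z ^ 3) * H) := by
  have hode := subst_twoPointSeries_add_two_mul_mul_subst_derivative
    (y := C (1 / 2) * W * Z * (W + Z) * H) (by simp [W, Z, H])
  rw [Dser_eq_mvExp_mul_subst, Derivation.leibniz, Derivation.leibniz, pderiv_mvExp_cubic,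
    pderiv_subst_twoPointSeries, map_add, pderiv_W, pderiv_Z]
  set c : R3 := C (1 / 2) with hc
  have h2 : 2 * c = 1 := by rw [hc, ← map_ofNat C 2, ← map_mul]; norm_num
  have h4 : (C (1 / 4) : R3) = c ^ 2 := by rw [hc, ← map_pow]; norm_num
  have h8 : (C (1 / 8) : R3) = c ^ 3 := by rw [hc, ← map_pow]; norm_num
  rw [h4, h8]
  simp only [smul_eq_mul]
  linear_combination (mvExp (C (1 / 24) * (W ^ 3 + Z ^ 3) * H) * (2 * W + Z)) * hode +
    (mvExp (C (1 / 24) * (W ^ 3 + Z ^ 3) * H) * W ^ 3 * H * (W + Z) *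
      twoPointSeries.subst (c * W * Z * (W + Z) * H) * c ^ 2) * h2

theorem eq_zero_of_homogeneous_equation {F : R3}
    (h : 2 * W * pderiv ℚ 0 ((W + Z) * F) + (W + Z) * F =
      W * F + C (1 / 4) * (W + Z) ^ 3 * W * H * F) : F = 0 := by
  refine eq_zero_of_two_mul_X_mul_pderiv_add_eq_X_mul (i := 0) (j := 1) (by decide)
    (Q := C (1 / 4) * (W + Z) ^ 3 * H * F - 2 * pderiv ℚ 0 (W * F)) ?_ ?_
  · rw [sub_eq_add_neg]
    refine le_trans (le_min ?_ ?_) (min_weightedOrder_le_add _)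
    · exact le_add_self.trans (le_weightedOrder_mul _)
    · rw [weightedOrder_neg]
      exact (le_weightedOrder_pderiv_X_mul 0 F).trans
        (le_add_self.trans (le_weightedOrder_mul _))
  · rw [add_mul, map_add] at h
    simp only [W, Z, H] at h ⊢
    linear_combination h

/-- Uniqueness in Dijkgraaf's formula: any series `A(w,z)`, symmetric in `w` and `z`,
with `A(0,z) = exp(z³ℏ/24)`, satisfying the translated KdV equation, equals `D`. -/
theorem Dser_unique (A : R3)
    (hsymm : swapWZ A = A)
    (hinit : setW0 A = mvExp (MvPowerSeries.C (σ := Fin 3) (R := ℚ) (1 / 24) * Z ^ 3 * H))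
    (heq : 2 * W * dW ((W + Z) * A) + (W + Z) * A =
      W * A + MvPowerSeries.C (σ := Fin 3) (R := ℚ) (1 / 4) * (W + Z) ^ 3 * W * H * A +
        setZ0 A * Z * setW0 A + 2 * W * setZ0 A * setW0 A) :
    A = Dser := by
  have hZ0 : setZ0 A = mvExp (C (1 / 24) * W ^ 3 * H) := by
    rw [← hsymm, setZ0_swapWZ, hinit, swapWZ_mvExp, swapWZ_eq_rename]
    simp [W, Z, H, rename_X, Equiv.swap_apply_of_ne_of_ne]
  have hprod : setZ0 A * setW0 A = mvExp (C (1 / 24) * (W ^ 3 + Z ^ 3) * H) := by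
    rw [hZ0, hinit, ← mvExp_add (by simp [W, H]) (by simp [Z, H])]
    ring_nf
  rw [dW_eq_pderiv] at heq
  refine sub_eq_zero.1 (eq_zero_of_homogeneous_equation ?_)
  rw [mul_sub, map_sub]
  linear_combination heq - Dser_equation + (Z + 2 * W) * hprod

end
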